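/- Let E be a metric space, (X_n) E-valued random variables on a probability space (Ω,F,P), G ⊂ F a sub-σ-field, and X an E-valued random variable on an extension (Ω̂,F̂,P̂). Then the following are equivalent: (1) E[f(X_n)Y] → Ê[f(X)Y] for all bounded continuous f and all bounded G-measurable Y; (2) the same convergence holds for all bounded uniformly continuous f and bounded G-measurable Y; (3) limsup_n E[1_{X_n∈F}Y] ≤ Ê[1_{X∈F}Y] for all closed sets F and all bounded nonnegative G-measurable Y; (4) Ê[1_{X∈G'}Y] ≤ liminf_n E[1_{X_n∈G'}Y] for all open sets G' and all bounded nonnegative G-measurable Y. -/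

import Mathlib

/-!
For a bounded nonnegative `G`-measurable weight `Y`, the quantities `E[f(Xₙ) Y]` and `Ê[f(X) Y]`
are integrals of `f` against the finite measures `νₙ = law of Xₙ under Y·P` and
`ν = law of X under Y·P̂`. Since `P̂` extends `P`, all of these have the same mass `E[Y]`, so after
dividing by it each of the four conditions, for a fixed `Y`, becomes one of the classical
portmanteau characterisations of the weak convergence `νₙ → ν` of probability measures (if
`E[Y] = 0`, everything vanishes). A general bounded `Y` is the difference of its positive and
negative parts.
-/

open MeasureTheory ProbabilityTheory Filter Real Set Topology

noncomputable section

/-- The discretization map of the regular partition with mesh `1/n`. -/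
def eta (n : ℕ) (t : ℝ) : ℝ := (⌊t * n⌋ : ℝ) / n

/-- A real-valued standard Brownian motion with respect to a filtration `F`. -/
structure IsBM {Ω : Type*} [MeasurableSpace Ω] (P : Measure Ω)
    (F : ℝ → MeasurableSpace Ω) (W : ℝ → Ω → ℝ) : Prop where
  adapted : ∀ t : ℝ, Measurable[F t] (W t)
  cont : ∀ ω, Continuous fun t => W t ω
  init : ∀ ω, W 0 ω = 0
  gauss : ∀ s t : ℝ, 0 ≤ s → s ≤ t →
    P.map (fun ω => W t ω - W s ω) = gaussianReal 0 (Real.toNNReal (t - s))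
  indep : ∀ s t : ℝ, 0 ≤ s → s ≤ t →
    Indep (MeasurableSpace.comap (fun ω => W t ω - W s ω) inferInstance) (F s) P

/-- An abstract Itô-type stochastic integral operator `si f a b = ∫_a^b f_s dV_s`
with respect to an integrator `V` and a filtration `F`. -/
structure SIop (Ω : Type*) [MeasurableSpace Ω] (P : Measure Ω)
    (F : ℝ → MeasurableSpace Ω) (V : ℝ → Ω → ℝ) where
  si : (ℝ → Ω → ℝ) → ℝ → ℝ → Ω → ℝ
  si_meas : ∀ f a b, Measurable (si f a b)
  si_add : ∀ f (a b c : ℝ), a ≤ b → b ≤ c →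
    ∀ᵐ ω ∂P, si f a c ω = si f a b ω + si f b c ω
  si_const : ∀ (ξ : Ω → ℝ) (a b : ℝ), Measurable[F a] ξ →
    ∀ᵐ ω ∂P, si (fun _ => ξ) a b ω = ξ ω * (V b ω - V a ω)
  si_linear : ∀ f g (a b : ℝ), ∀ᵐ ω ∂P,
    si (fun s ω => f s ω + g s ω) a b ω = si f a b ω + si g a b ω

/-- The predictable σ-field on `ℝ × Ω` associated with the filtration `F`. -/
def predSigma {Ω : Type*} (F : ℝ → MeasurableSpace Ω) : MeasurableSpace (ℝ × Ω) :=
  MeasurableSpace.generateFrom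
    {u | ∃ (s t : ℝ) (A : Set Ω), s < t ∧ MeasurableSet[F s] A ∧ u = Set.Ioc s t ×ˢ A}

/-- A process is predictable if it is measurable with respect to the predictable σ-field. -/
def Predictable {Ω : Type*} (F : ℝ → MeasurableSpace Ω) (f : ℝ → Ω → ℝ) : Prop :=
  Measurable[predSigma F] fun p => f p.1 p.2

/-- The natural filtration `σ(W_s : 0 ≤ s ≤ t)` of a single process. -/
def filtOf {Ω : Type*} (W : ℝ → Ω → ℝ) (t : ℝ) : MeasurableSpace Ω :=
  ⨆ s ∈ Set.Icc (0:ℝ) t, MeasurableSpace.comap (W s) inferInstance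

/-- The natural filtration generated by a family of processes. -/
def filtOfFam {Ω ι : Type*} (W : ι → ℝ → Ω → ℝ) (t : ℝ) : MeasurableSpace Ω :=
  ⨆ i, filtOf (W i) t

/-- `G`-stable convergence in law of `X n` to `Xl`, the latter defined on an
extension `Ω × Ω₀` of the original probability space. -/
def StableConvTo {Ω Ω₀ E : Type*} [MeasurableSpace Ω] [MeasurableSpace Ω₀]
    [PseudoMetricSpace E] (P : Measure Ω) (G : MeasurableSpace Ω)
    (X : ℕ → Ω → E) (Phat : Measure (Ω × Ω₀)) (Xl : Ω × Ω₀ → E) : Prop :=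
  ∀ f : E → ℝ, Continuous f → (∃ C, ∀ x, |f x| ≤ C) →
  ∀ Y : Ω → ℝ, Measurable[G] Y → (∃ C, ∀ ω, |Y ω| ≤ C) →
    Tendsto (fun n => ∫ ω, f (X n ω) * Y ω ∂P) atTop
      (𝓝 (∫ p, f (Xl p) * Y p.1 ∂Phat))

open scoped ENNReal

-- No boundedness is needed: `sInf` and `sSup` commute with positive scaling even in the junk cases.
lemma Real.limsup_const_mul_of_pos {ι : Type*} {l : Filter ι} (u : ι → ℝ) {c : ℝ} (hc : 0 < c) :
    limsup (fun i => c * u i) l = c * limsup u l := by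
  simp only [limsup_eq, ← smul_eq_mul, ← Real.sInf_smul_of_nonneg hc.le]
  congr 1
  ext a
  simp only [Set.mem_smul_set_iff_inv_smul_mem₀ hc.ne', mem_ofPred_eq, smul_eq_mul,
    le_inv_mul_iff₀ hc]

lemma Real.liminf_const_mul_of_pos {ι : Type*} {l : Filter ι} (u : ι → ℝ) {c : ℝ} (hc : 0 < c) :
    liminf (fun i => c * u i) l = c * liminf u l := by
  simp only [liminf_eq, ← smul_eq_mul, ← Real.sSup_smul_of_nonneg hc.le]
  congr 1
  ext a
  simp only [Set.mem_smul_set_iff_inv_smul_mem₀ hc.ne', mem_ofPred_eq, smul_eq_mul,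
    inv_mul_le_iff₀ hc]

lemma abs_max_zero_le {a D : ℝ} (h : |a| ≤ D) : |max a 0| ≤ D := by
  rw [abs_of_nonneg (le_max_right _ _)]
  exact max_le ((le_abs_self a).trans h) ((abs_nonneg a).trans h)

namespace MeasureTheory

namespace ProbabilityMeasure

variable {E ι : Type*} [MeasurableSpace E] {L : Filter ι} {μs : ι → ProbabilityMeasure E}
  {μ : ProbabilityMeasure E}

lemma limsup_measureReal_eq [L.NeBot] (s : Set E) :
    limsup (fun i => (μs i : Measure E).real s) L
      = (limsup (fun i => (μs i : Measure E) s) L).toReal :=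
  ENNReal.limsup_toReal_eq ENNReal.one_ne_top (.of_forall fun _ => prob_le_one)

lemma liminf_measureReal_eq [L.NeBot] (s : Set E) :
    liminf (fun i => (μs i : Measure E).real s) L
      = (liminf (fun i => (μs i : Measure E) s) L).toReal :=
  ENNReal.liminf_toReal_eq ENNReal.one_ne_top (.of_forall fun _ => prob_le_one)

lemma liminf_measure_ne_top [L.NeBot] (s : Set E) :
    liminf (fun i => (μs i : Measure E) s) L ≠ ∞ :=
  ne_top_of_le_ne_top ENNReal.one_ne_top
    (liminf_le_of_frequently_le' (.of_forall fun _ => prob_le_one))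

variable [PseudoMetricSpace E] [OpensMeasurableSpace E]

theorem tendsto_iff_forall_continuous_integral_tendsto :
    Tendsto μs L (𝓝 μ) ↔ ∀ f : E → ℝ, Continuous f → (∃ C, ∀ x, |f x| ≤ C) →
      Tendsto (fun i => ∫ x, f x ∂(μs i : Measure E)) L (𝓝 (∫ x, f x ∂(μ : Measure E))) := by
  rw [tendsto_iff_forall_integral_tendsto]
  refine ⟨fun h f hf ⟨C, hC⟩ => h (.ofNormedAddCommGroup f hf C hC), fun h f => ?_⟩
  exact h f f.continuous ⟨‖f‖, f.norm_coe_le_norm⟩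

theorem tendsto_iff_forall_uniformContinuous_integral_tendsto [L.IsCountablyGenerated] :
    Tendsto μs L (𝓝 μ) ↔ ∀ f : E → ℝ, UniformContinuous f → (∃ C, ∀ x, |f x| ≤ C) →
      Tendsto (fun i => ∫ x, f x ∂(μs i : Measure E)) L (𝓝 (∫ x, f x ∂(μ : Measure E))) := by
  refine ⟨fun h f hf => tendsto_iff_forall_continuous_integral_tendsto.mp h f hf.continuous,
    fun h => tendsto_iff_forall_lipschitz_integral_tendsto.mpr fun f ⟨C, hC⟩ ⟨K, hK⟩ => ?_⟩
  obtain ⟨C', hC'⟩ := (Metric.isBounded_iff (s := range f).mpr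
    ⟨C, by rintro _ ⟨x, rfl⟩ _ ⟨y, rfl⟩; exact hC x y⟩).exists_norm_le
  exact h f hK.uniformContinuous ⟨C', fun x => hC' _ (mem_range_self x)⟩

theorem tendsto_iff_forall_isClosed_limsup_measureReal_le [L.IsCountablyGenerated] [L.NeBot] :
    Tendsto μs L (𝓝 μ) ↔ ∀ F : Set E, IsClosed F →
      limsup (fun i => (μs i : Measure E).real F) L ≤ (μ : Measure E).real F := by
  refine ⟨fun h F hF => ?_, tendsto_of_forall_isClosed_limsup_real_le'⟩
  rw [limsup_measureReal_eq]
  exact ENNReal.toReal_mono (measure_ne_top _ _) (limsup_measure_closed_le_of_tendsto h hF)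

theorem tendsto_iff_forall_isOpen_le_liminf_measureReal [L.IsCountablyGenerated] [L.NeBot] :
    Tendsto μs L (𝓝 μ) ↔ ∀ U : Set E, IsOpen U →
      (μ : Measure E).real U ≤ liminf (fun i => (μs i : Measure E).real U) L := by
  have h_real (U : Set E) :
      (μ : Measure E).real U ≤ liminf (fun i => (μs i : Measure E).real U) L
        ↔ (μ : Measure E) U ≤ liminf (fun i => (μs i : Measure E) U) L := by
    rw [liminf_measureReal_eq, measureReal_def,
      ENNReal.toReal_le_toReal (measure_ne_top _ _) (liminf_measure_ne_top _)]
  simp only [h_real]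
  exact ⟨fun h U hU => le_liminf_measure_open_of_tendsto h hU, tendsto_of_forall_isOpen_le_liminf'⟩

end ProbabilityMeasure

section EqualMass

variable {E ι : Type*} [MeasurableSpace E] [PseudoMetricSpace E] [OpensMeasurableSpace E]
  {L : Filter ι} [L.IsCountablyGenerated] [L.NeBot]

theorem tfae_portmanteau_of_measure_univ_eq {νs : ι → Measure E} {ν : Measure E}
    [IsFiniteMeasure ν] (hmass : ∀ i, νs i univ = ν univ) :
    List.TFAE [
      ∀ f : E → ℝ, Continuous f → (∃ C, ∀ x, |f x| ≤ C) →
        Tendsto (fun i => ∫ x, f x ∂νs i) L (𝓝 (∫ x, f x ∂ν)),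
      ∀ f : E → ℝ, UniformContinuous f → (∃ C, ∀ x, |f x| ≤ C) →
        Tendsto (fun i => ∫ x, f x ∂νs i) L (𝓝 (∫ x, f x ∂ν)),
      ∀ F : Set E, IsClosed F → limsup (fun i => (νs i).real F) L ≤ ν.real F,
      ∀ U : Set E, IsOpen U → ν.real U ≤ liminf (fun i => (νs i).real U) L] := by
  rcases eq_zero_or_neZero ν with rfl | _
  · have hzero (i : ι) : νs i = 0 := Measure.measure_univ_eq_zero.mp (by simp [hmass i])
    refine List.tfae_of_forall True _ fun p hp => ?_
    simp only [List.mem_cons, List.not_mem_nil, or_false] at hp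
    rcases hp with rfl | rfl | rfl | rfl <;> simp [hzero]
  set c := ν univ
  have hc0 : c ≠ 0 := NeZero.ne _
  have hctop : c ≠ ∞ := measure_ne_top _ _
  have hc : 0 < c.toReal := ENNReal.toReal_pos hc0 hctop
  have hprob {ρ : Measure E} (hρ : ρ univ = c) : IsProbabilityMeasure (c⁻¹ • ρ) :=
    ⟨by rw [Measure.smul_apply, hρ, smul_eq_mul, ENNReal.inv_mul_cancel hc0 hctop]⟩
  let μs (i : ι) : ProbabilityMeasure E := ⟨c⁻¹ • νs i, hprob (hmass i)⟩
  let μ : ProbabilityMeasure E := ⟨c⁻¹ • ν, hprob rfl⟩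
  have hunscale (ρ : Measure E) : ρ = c • c⁻¹ • ρ := by
    rw [smul_smul, ENNReal.mul_inv_cancel hc0 hctop, one_smul]
  have hνs (i : ι) : νs i = c • (μs i : Measure E) := hunscale _
  have hν : ν = c • (μ : Measure E) := hunscale _
  refine List.tfae_of_forall (Tendsto μs L (𝓝 μ)) _ fun p hp => ?_
  simp only [List.mem_cons, List.not_mem_nil, or_false] at hp
  simp only [hνs, hν, integral_smul_measure, tendsto_const_smul_iff₀ hc.ne',
    measureReal_ennreal_smul_apply, Real.limsup_const_mul_of_pos _ hc,
    Real.liminf_const_mul_of_pos _ hc, mul_le_mul_iff_right₀ hc] at hp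
  rcases hp with rfl | rfl | rfl | rfl
  · exact ProbabilityMeasure.tendsto_iff_forall_continuous_integral_tendsto.symm
  · exact ProbabilityMeasure.tendsto_iff_forall_uniformContinuous_integral_tendsto.symm
  · exact ProbabilityMeasure.tendsto_iff_forall_isClosed_limsup_measureReal_le.symm
  · exact ProbabilityMeasure.tendsto_iff_forall_isOpen_le_liminf_measureReal.symm

end EqualMass

section WeightedLaw

variable {Ω E : Type*} [MeasurableSpace Ω] [MeasurableSpace E]

def weightedLaw (μ : Measure Ω) (Y : Ω → ℝ) (X : Ω → E) : Measure E :=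
  (μ.withDensity fun ω => ENNReal.ofReal (Y ω)).map X

variable {μ : Measure Ω} {Y : Ω → ℝ} {X : Ω → E}

lemma isFiniteMeasure_weightedLaw (hY : Integrable Y μ) : IsFiniteMeasure (weightedLaw μ Y X) :=
  have := isFiniteMeasure_withDensity_ofReal hY.hasFiniteIntegral
  Measure.isFiniteMeasure_map _ _

lemma weightedLaw_apply_univ (hX : Measurable X) (hY : Integrable Y μ) (hY0 : 0 ≤ Y) :
    weightedLaw μ Y X univ = ENNReal.ofReal (∫ ω, Y ω ∂μ) := by
  rw [weightedLaw, Measure.map_apply hX .univ, preimage_univ, withDensity_apply _ .univ,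
    Measure.restrict_univ, ofReal_integral_eq_lintegral_ofReal hY (.of_forall hY0)]

lemma integral_weightedLaw (hX : Measurable X) (hY : Measurable Y) (hY0 : 0 ≤ Y) {g : E → ℝ}
    (hg : Measurable g) :
    ∫ x, g x ∂weightedLaw μ Y X = ∫ ω, g (X ω) * Y ω ∂μ := by
  rw [weightedLaw, integral_map hX.aemeasurable hg.aestronglyMeasurable,
    integral_withDensity_eq_integral_toReal_smul hY.ennreal_ofReal
      (.of_forall fun _ => ENNReal.ofReal_lt_top)]
  simp only [ENNReal.toReal_ofReal (hY0 _), smul_eq_mul, mul_comm]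

lemma measureReal_weightedLaw (hX : Measurable X) (hY : Measurable Y) (hY0 : 0 ≤ Y) {S : Set E}
    (hS : MeasurableSet S) :
    (weightedLaw μ Y X).real S = ∫ ω, S.indicator (fun _ => (1 : ℝ)) (X ω) * Y ω ∂μ := by
  rw [← integral_weightedLaw hX hY hY0 (measurable_const.indicator hS)]
  exact (integral_indicator_one hS).symm

end WeightedLaw

theorem tfae_portmanteau_weighted {Ω Ω' E ι : Type*} [MeasurableSpace Ω] [MeasurableSpace Ω']
    [MeasurableSpace E] [PseudoMetricSpace E] [OpensMeasurableSpace E] {L : Filter ι}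
    [L.IsCountablyGenerated] [L.NeBot] {μ : Measure Ω} {μ' : Measure Ω'} {X : ι → Ω → E}
    {Z : Ω' → E} {Y : Ω → ℝ} {Y' : Ω' → ℝ} (hX : ∀ i, Measurable (X i)) (hZ : Measurable Z)
    (hY : Measurable Y) (hY' : Measurable Y') (hY0 : 0 ≤ Y) (hY'0 : 0 ≤ Y')
    (hYi : Integrable Y μ) (hY'i : Integrable Y' μ') (hmass : ∫ ω, Y ω ∂μ = ∫ ω, Y' ω ∂μ') :
    List.TFAE [
      ∀ f : E → ℝ, Continuous f → (∃ C, ∀ x, |f x| ≤ C) →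
        Tendsto (fun i => ∫ ω, f (X i ω) * Y ω ∂μ) L (𝓝 (∫ ω, f (Z ω) * Y' ω ∂μ')),
      ∀ f : E → ℝ, UniformContinuous f → (∃ C, ∀ x, |f x| ≤ C) →
        Tendsto (fun i => ∫ ω, f (X i ω) * Y ω ∂μ) L (𝓝 (∫ ω, f (Z ω) * Y' ω ∂μ')),
      ∀ F : Set E, IsClosed F →
        limsup (fun i => ∫ ω, F.indicator (fun _ => (1 : ℝ)) (X i ω) * Y ω ∂μ) L
          ≤ ∫ ω, F.indicator (fun _ => (1 : ℝ)) (Z ω) * Y' ω ∂μ',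
      ∀ U : Set E, IsOpen U →
        ∫ ω, U.indicator (fun _ => (1 : ℝ)) (Z ω) * Y' ω ∂μ'
          ≤ liminf (fun i => ∫ ω, U.indicator (fun _ => (1 : ℝ)) (X i ω) * Y ω ∂μ) L] := by
  have := isFiniteMeasure_weightedLaw (X := Z) hY'i
  have hlaws := tfae_portmanteau_of_measure_univ_eq (L := L)
    (νs := fun i => weightedLaw μ Y (X i)) (ν := weightedLaw μ' Y' Z) fun i => by
      rw [weightedLaw_apply_univ (hX i) hYi hY0, weightedLaw_apply_univ hZ hY'i hY'0, hmass]
  have hUC (f : E → ℝ) (hf : UniformContinuous f) : Measurable f := hf.continuous.measurable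
  -- the measurability side conditions are discharged from the hypotheses under each binder
  simpa (contextual := true) only [integral_weightedLaw, measureReal_weightedLaw, hX, hY, hY0,
    hZ, hY', hY'0, Continuous.measurable, hUC, IsClosed.measurableSet,
    IsOpen.measurableSet] using hlaws

lemma integral_mul_max_sub_integral_mul_max_neg {α : Type*} [MeasurableSpace α] {ν : Measure α}
    [IsFiniteMeasure ν] {k V : α → ℝ} (hk : Measurable k) {C D : ℝ} (hkC : ∀ x, |k x| ≤ C)
    (hV : Measurable V) (hVD : ∀ x, |V x| ≤ D) :
    ∫ x, k x * max (V x) 0 ∂ν - ∫ x, k x * max (-V x) 0 ∂ν = ∫ x, k x * V x ∂ν := by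
  have hint {W : α → ℝ} (hW : Measurable W) (hWD : ∀ x, |W x| ≤ D) :
      Integrable (fun x => k x * W x) ν :=
    (Integrable.of_bound hW.aestronglyMeasurable D (.of_forall hWD)).bdd_mul
      hk.aestronglyMeasurable (.of_forall hkC)
  rw [← integral_sub (hint (hV.max measurable_const) fun x => abs_max_zero_le (hVD x))
    (hint (W := fun x => max (-V x) 0) (hV.neg.max measurable_const)
      fun x => abs_max_zero_le ((abs_neg _).trans_le (hVD x)))]
  simp only [← mul_sub, max_zero_sub_max_neg_zero_eq_self]

theorem tendsto_integral_mul_of_forall_nonneg {Ω Ω' ι : Type*} {G : MeasurableSpace Ω}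
    [mΩ : MeasurableSpace Ω] [MeasurableSpace Ω'] (hG : G ≤ mΩ) {μ : Measure Ω}
    {μ' : Measure Ω'} [IsFiniteMeasure μ] [IsFiniteMeasure μ'] {L : Filter ι} {q : Ω' → Ω}
    (hq : Measurable q) {g : ι → Ω → ℝ} {g' : Ω' → ℝ} {C : ℝ} (hg : ∀ i, Measurable (g i))
    (hgC : ∀ i ω, |g i ω| ≤ C) (hg' : Measurable g') (hg'C : ∀ ω, |g' ω| ≤ C)
    (h : ∀ W : Ω → ℝ, Measurable[G] W → (∃ D, ∀ ω, |W ω| ≤ D) → (∀ ω, 0 ≤ W ω) →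
      Tendsto (fun i => ∫ ω, g i ω * W ω ∂μ) L (𝓝 (∫ ω, g' ω * W (q ω) ∂μ')))
    {Y : Ω → ℝ} (hY : Measurable[G] Y) (hYb : ∃ D, ∀ ω, |Y ω| ≤ D) :
    Tendsto (fun i => ∫ ω, g i ω * Y ω ∂μ) L (𝓝 (∫ ω, g' ω * Y (q ω) ∂μ')) := by
  obtain ⟨D, hD⟩ := hYb
  have hYm : Measurable Y := hY.mono hG le_rfl
  have hpos := h (fun ω => max (Y ω) 0) (hY.max measurable_const)
    ⟨D, fun ω => abs_max_zero_le (hD ω)⟩ fun ω => le_max_right _ _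
  have hneg := h (fun ω => max (-Y ω) 0) (hY.neg.max measurable_const)
    ⟨D, fun ω => abs_max_zero_le ((abs_neg _).trans_le (hD ω))⟩ fun ω => le_max_right _ _
  rw [← integral_mul_max_sub_integral_mul_max_neg hg' hg'C (V := fun ω => Y (q ω))
    (hYm.comp hq) fun ω => hD (q ω)]
  exact (hpos.sub hneg).congr fun i =>
    integral_mul_max_sub_integral_mul_max_neg (hg i) (hgC i) hYm hD

end MeasureTheory

open MeasureTheory

/-- Portmanteau theorem for `G`-stable convergence in law (Lemma 2.2). -/
theorem stmt0 {Ω Ω₀ E : Type*} (G : MeasurableSpace Ω)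
    [mΩ : MeasurableSpace Ω] [MeasurableSpace Ω₀]
    [MetricSpace E] [MeasurableSpace E] [BorelSpace E]
    (P : Measure Ω) [IsProbabilityMeasure P]
    (Phat : Measure (Ω × Ω₀)) [IsProbabilityMeasure Phat]
    (hext : Phat.map Prod.fst = P)
    (hG : G ≤ mΩ)
    (X : ℕ → Ω → E) (hX : ∀ n, Measurable (X n))
    (Xl : Ω × Ω₀ → E) (hXl : Measurable Xl) :
    List.TFAE [
      (∀ f : E → ℝ, Continuous f → (∃ C, ∀ x, |f x| ≤ C) →
        ∀ Y : Ω → ℝ, Measurable[G] Y → (∃ C, ∀ ω, |Y ω| ≤ C) →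
        Tendsto (fun n => ∫ ω, f (X n ω) * Y ω ∂P) atTop
          (𝓝 (∫ p, f (Xl p) * Y p.1 ∂Phat))),
      (∀ f : E → ℝ, UniformContinuous f → (∃ C, ∀ x, |f x| ≤ C) →
        ∀ Y : Ω → ℝ, Measurable[G] Y → (∃ C, ∀ ω, |Y ω| ≤ C) →
        Tendsto (fun n => ∫ ω, f (X n ω) * Y ω ∂P) atTop
          (𝓝 (∫ p, f (Xl p) * Y p.1 ∂Phat))),
      (∀ F : Set E, IsClosed F →
        ∀ Y : Ω → ℝ, Measurable[G] Y → (∃ C, ∀ ω, |Y ω| ≤ C) → (∀ ω, 0 ≤ Y ω) →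
        Filter.limsup
          (fun n => ∫ ω, Set.indicator F (fun _ => (1:ℝ)) (X n ω) * Y ω ∂P) atTop
          ≤ ∫ p, Set.indicator F (fun _ => (1:ℝ)) (Xl p) * Y p.1 ∂Phat),
      (∀ U : Set E, IsOpen U →
        ∀ Y : Ω → ℝ, Measurable[G] Y → (∃ C, ∀ ω, |Y ω| ≤ C) → (∀ ω, 0 ≤ Y ω) →
        ∫ p, Set.indicator U (fun _ => (1:ℝ)) (Xl p) * Y p.1 ∂Phat
          ≤ Filter.liminf
              (fun n => ∫ ω, Set.indicator U (fun _ => (1:ℝ)) (X n ω) * Y ω ∂P) atTop)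
    ] := by
  have hw (Y : Ω → ℝ) (hY : Measurable[G] Y) {C : ℝ} (hC : ∀ ω, |Y ω| ≤ C)
      (hY0 : ∀ ω, 0 ≤ Y ω) :=
    have hYm : Measurable Y := hY.mono hG le_rfl
    have hYm' : Measurable fun p : Ω × Ω₀ => Y p.1 := hYm.comp measurable_fst
    tfae_portmanteau_weighted (L := atTop) (μ := P) (μ' := Phat) hX hXl hYm hYm' hY0
      (fun p => hY0 p.1) (.of_bound hYm.aestronglyMeasurable C (.of_forall hC))
      (.of_bound hYm'.aestronglyMeasurable C (.of_forall fun p => hC p.1))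
      (by rw [← hext, integral_map measurable_fst.aemeasurable hYm.aestronglyMeasurable])
  tfae_have 1 → 2 := fun h f hf => h f hf.continuous
  tfae_have 2 → 3 := by
    intro h F hF Y hY ⟨C, hC⟩ hY0
    have h23 := (hw Y hY hC hY0).out 1 2
    exact h23.mp (fun f hf hfb => h f hf hfb Y hY ⟨C, hC⟩) F hF
  tfae_have 3 → 4 := by
    intro h U hU Y hY ⟨C, hC⟩ hY0
    have h34 := (hw Y hY hC hY0).out 2 3
    exact h34.mp (fun F hF => h F hF Y hY ⟨C, hC⟩ hY0) U hU
  tfae_have 4 → 1 := by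
    intro h f hf ⟨C, hC⟩
    refine fun Y => tendsto_integral_mul_of_forall_nonneg hG measurable_fst
      (fun n => hf.measurable.comp (hX n)) (fun n ω => hC _) (hf.measurable.comp hXl)
      (fun p => hC _) fun W hW ⟨D, hD⟩ hW0 => ?_
    have h41 := (hw W hW hD hW0).out 3 0
    exact h41.mp (fun U hU => h U hU W hW ⟨D, hD⟩ hW0) f hf ⟨C, hC⟩
  tfae_finish
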